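/- arXiv:2508.17520 — 2 statements merged into one kernel-verified Lean document; each statement's English description precedes it below -/
import Mathlib

section
/- Let A be an n×n pairwise comparison matrix (positive and reciprocal) and define x ∈ ℝ^n by x_i = (1/n) Σ_{j=1}^n ln a_ij. Then Σ_{i=1}^n x_i = 0, x is a global minimizer over ℝ^n of f(y) = Σ_{i=1}^n Σ_{j=1}^n (ln a_ij − (y_i − y_j))², and every minimizer y of f with Σ_{i=1}^n y_i = 0 equals x. Equivalently, the LLSM weight vector of a complete PCM is the vector of row-wise geometric means w_i = (∏_{j=1}^n a_ij)^{1/n}, unique up to a positive scalar multiple. -/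
open Finset in
/-- For a pairwise comparison matrix `A`, the vector
`x i = (1/n) ∑ j, log (A i j)` sums to zero, globally minimizes the logarithmic
least squares objective `f y = ∑ i, ∑ j, (log (A i j) - (y i - y j))²` over `ℝⁿ`,
is the unique such minimizer among vectors summing to zero, and `exp (x i)` is the
row-wise geometric mean `(∏ j, A i j) ^ (1/n)` (the LLSM weight vector, unique up
to a positive scalar multiple). -/
theorem llsm_solution_of_complete_pcm_is_geometric_mean
    (n : ℕ) (hn : 0 < n) (A : Matrix (Fin n) (Fin n) ℝ)
    (hpos : ∀ i j, 0 < A i j)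
    (hrec : ∀ i j, A j i = 1 / A i j)
    (x : Fin n → ℝ)
    (hx : ∀ i, x i = (1 / (n : ℝ)) * ∑ j, Real.log (A i j)) :
    (∑ i, x i = 0) ∧
      (∀ y : Fin n → ℝ,
          (∑ i, ∑ j, (Real.log (A i j) - (x i - x j)) ^ 2) ≤
            ∑ i, ∑ j, (Real.log (A i j) - (y i - y j)) ^ 2) ∧
      (∀ y : Fin n → ℝ, (∑ i, y i = 0) →
          (∀ z : Fin n → ℝ,
              (∑ i, ∑ j, (Real.log (A i j) - (y i - y j)) ^ 2) ≤
                ∑ i, ∑ j, (Real.log (A i j) - (z i - z j)) ^ 2) →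
          y = x) ∧
      (∀ i, Real.exp (x i) = (∏ j, A i j) ^ ((1 : ℝ) / n)) := by
  have hn' : (n : ℝ) ≠ 0 := Nat.cast_ne_zero.mpr hn.ne'
  set L : Fin n → Fin n → ℝ := fun i j => Real.log (A i j) with hLdef
  have hL : ∀ i j, L j i = -L i j := by
    intro i j
    simp only [hLdef, hrec i j, one_div, Real.log_inv]
  have hrowL : ∀ i, ∑ j, L i j = (n : ℝ) * x i := by
    intro i
    rw [hx i]
    field_simp
    rfl
  -- sum of x is zero
  have hsum : ∑ i, x i = 0 := by
    have hS : (∑ i, ∑ j, L i j) = 0 := by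
      have h1 : (∑ i, ∑ j, L i j) = ∑ j, ∑ i, L i j := Finset.sum_comm
      have h2 : (∑ j, ∑ i : Fin n, L i j) = -∑ j, ∑ i : Fin n, L j i := by
        rw [← Finset.sum_neg_distrib]
        exact Finset.sum_congr rfl fun j _ => by
          rw [← Finset.sum_neg_distrib]
          exact Finset.sum_congr rfl fun i _ => hL j i
      linarith [h1, h2]
    have : ∑ i, x i = (1 / (n : ℝ)) * ∑ i, ∑ j, L i j := by
      rw [Finset.mul_sum]
      exact Finset.sum_congr rfl fun i _ => hx i
    rw [this, hS, mul_zero]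
  -- residual d and its properties
  set d : Fin n → Fin n → ℝ := fun i j => L i j - (x i - x j) with hddef
  have hdanti : ∀ i j, d j i = -d i j := by
    intro i j; simp only [hddef, hL i j]; ring
  have hdrow : ∀ i, ∑ j, d i j = 0 := by
    intro i
    simp only [hddef]
    rw [Finset.sum_sub_distrib, hrowL i, Finset.sum_sub_distrib, Finset.sum_const,
      Finset.card_univ, Fintype.card_fin, hsum, nsmul_eq_mul]
    ring
  have hdcol : ∀ j, ∑ i, d i j = 0 := by
    intro j
    have : (∑ i, d i j) = -∑ i, d j i := by
      rw [← Finset.sum_neg_distrib]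
      exact Finset.sum_congr rfl fun i _ => hdanti j i
    rw [this, hdrow j, neg_zero]
  -- key identity
  have key : ∀ y : Fin n → ℝ,
      (∑ i, ∑ j, (L i j - (y i - y j)) ^ 2) =
        (∑ i, ∑ j, d i j ^ 2) +
          ∑ i, ∑ j, ((x i - y i) - (x j - y j)) ^ 2 := by
    intro y
    set u : Fin n → ℝ := fun i => x i - y i with hudef
    have expand : ∀ i j, (L i j - (y i - y j)) ^ 2 =
        d i j ^ 2 + (u i - u j) ^ 2 + 2 * (d i j * u i) - 2 * (d i j * u j) := by
      intro i j; simp only [hddef, hudef]; ring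
    have cross1 : (∑ i, ∑ j, d i j * u i) = 0 := by
      refine Finset.sum_eq_zero fun i _ => ?_
      rw [← Finset.sum_mul, hdrow i, zero_mul]
    have cross2 : (∑ i, ∑ j, d i j * u j) = 0 := by
      rw [Finset.sum_comm]
      refine Finset.sum_eq_zero fun j _ => ?_
      rw [← Finset.sum_mul, hdcol j, zero_mul]
    calc (∑ i, ∑ j, (L i j - (y i - y j)) ^ 2)
        = ∑ i, ∑ j, (d i j ^ 2 + (u i - u j) ^ 2 + 2 * (d i j * u i)
            - 2 * (d i j * u j)) := by
          exact Finset.sum_congr rfl fun i _ =>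
            Finset.sum_congr rfl fun j _ => expand i j
      _ = (∑ i, ∑ j, d i j ^ 2) + (∑ i, ∑ j, (u i - u j) ^ 2)
            + 2 * (∑ i, ∑ j, d i j * u i) - 2 * (∑ i, ∑ j, d i j * u j) := by
          simp [Finset.sum_add_distrib, Finset.sum_sub_distrib, Finset.mul_sum]
      _ = (∑ i, ∑ j, d i j ^ 2) + ∑ i, ∑ j, (u i - u j) ^ 2 := by
          rw [cross1, cross2]; ring
  refine ⟨hsum, ?_, ?_, ?_⟩
  · intro y
    have := key y
    have hnn : (0:ℝ) ≤ ∑ i, ∑ j, ((x i - y i) - (x j - y j)) ^ 2 :=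
      Finset.sum_nonneg fun i _ => Finset.sum_nonneg fun j _ => sq_nonneg _
    have hxd : (∑ i, ∑ j, (L i j - (x i - x j)) ^ 2) = ∑ i, ∑ j, d i j ^ 2 := rfl
    simp only [hLdef] at this hxd ⊢
    linarith
  · intro y hy0 hmin
    have h1 := hmin x
    have h2 := key y
    have h3 := key x
    have hx0 : (∑ i, ∑ j, ((x i - x i) - (x j - x j)) ^ 2) = 0 := by simp
    simp only [hLdef] at h2 h3
    have hQ : (∑ i, ∑ j, ((x i - y i) - (x j - y j)) ^ 2) ≤ 0 := by linarith
    have hnn : ∀ i ∈ Finset.univ, (0:ℝ) ≤ ∑ j, ((x i - y i) - (x j - y j)) ^ 2 :=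
      fun i _ => Finset.sum_nonneg fun j _ => sq_nonneg _
    have hQ0 : (∑ i, ∑ j, ((x i - y i) - (x j - y j)) ^ 2) = 0 :=
      le_antisymm hQ (Finset.sum_nonneg hnn)
    have hterm : ∀ i j, ((x i - y i) - (x j - y j)) ^ 2 = 0 := by
      intro i j
      have hi := (Finset.sum_eq_zero_iff_of_nonneg hnn).mp hQ0 i (Finset.mem_univ i)
      have := (Finset.sum_eq_zero_iff_of_nonneg
        (fun j _ => sq_nonneg ((x i - y i) - (x j - y j)))).mp hi j (Finset.mem_univ j)
      exact this
    have huconst : ∀ i j, x i - y i = x j - y j := by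
      intro i j
      have := hterm i j
      have := pow_eq_zero_iff (n := 2) (by norm_num) |>.mp this
      linarith
    funext i
    have hsumu : ∑ j, (x j - y j) = 0 := by
      rw [Finset.sum_sub_distrib, hsum, hy0, sub_zero]
    have : ∑ j, (x j - y j) = (n : ℝ) * (x i - y i) := by
      rw [Finset.sum_congr rfl fun j _ => (huconst j i)]
      simp [Finset.sum_const, Finset.card_univ, mul_comm]
      ring
    rw [hsumu] at this
    have : x i - y i = 0 := by
      rcases mul_eq_zero.mp this.symm with h | h
      · exact absurd h hn'
      · exact h
    linarith
  · intro i
    have hprodpos : (0:ℝ) < ∏ j, A i j := Finset.prod_pos fun j _ => hpos i j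
    rw [Real.rpow_def_of_pos hprodpos, Real.log_prod (fun j _ => (hpos i j).ne'),
      hx i]
    ring_nf
end

section
/- Let n ≥ 1, let G be a simple graph on the vertex set {1,…,n}, and let c : {1,…,n}² → ℝ satisfy c(j,i) = −c(i,j) for every edge {i,j} of G (the logarithms of the known entries of an incomplete pairwise comparison matrix). Define f : ℝ^n → ℝ by f(x) = Σ over ordered pairs (i,j) with {i,j} an edge of G of (c(i,j) − x_i + x_j)². Then there exists a unique x ∈ ℝ^n with Σ_{i=1}^n x_i = 0 that minimizes f over ℝ^n if and only if G is connected. -/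
open Finset

section Aux
variable {n : ℕ} (G : SimpleGraph (Fin n)) [DecidableRel G.Adj]

private def Dmap : (Fin n → ℝ) →ₗ[ℝ] EuclideanSpace ℝ (Fin n × Fin n) where
  toFun x := WithLp.toLp 2 (fun p : Fin n × Fin n => if G.Adj p.1 p.2 then x p.1 - x p.2 else 0)
  map_add' x y := by
    ext p
    by_cases h : G.Adj p.1 p.2 <;> simp [h, PiLp.add_apply] <;> ring
  map_smul' r x := by
    ext p
    by_cases h : G.Adj p.1 p.2 <;> simp [h, PiLp.smul_apply, smul_eq_mul] <;> ring

private def cvec (c : Fin n → Fin n → ℝ) : EuclideanSpace ℝ (Fin n × Fin n) :=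
  WithLp.toLp 2 (fun p : Fin n × Fin n => if G.Adj p.1 p.2 then c p.1 p.2 else 0)

private lemma walk_const {x : Fin n → ℝ} (h : ∀ i j, G.Adj i j → x i = x j)
    {u v : Fin n} (p : G.Walk u v) : x u = x v := by
  induction p with
  | nil => rfl
  | cons h' _ ih => exact (h _ _ h').trans ih

private lemma norm_sq_eq (v : EuclideanSpace ℝ (Fin n × Fin n)) :
    ‖v‖ ^ 2 = ∑ p, (v p) ^ 2 := by
  rw [EuclideanSpace.norm_eq, Real.sq_sqrt (by positivity)]
  simp [sq_abs]

private lemma F_eq (c : Fin n → Fin n → ℝ) (x : Fin n → ℝ) :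
    (∑ i, ∑ j, if G.Adj i j then (c i j - x i + x j) ^ 2 else 0) =
      ‖cvec G c - Dmap G x‖ ^ 2 := by
  rw [norm_sq_eq, Fintype.sum_prod_type]
  refine Finset.sum_congr rfl fun i _ => Finset.sum_congr rfl fun j _ => ?_
  by_cases h : G.Adj i j <;> simp [Dmap, cvec, h, PiLp.sub_apply] <;> ring

end Aux

open Finset in
/-- For an incomplete pairwise comparison matrix with representing
graph `G` and antisymmetric logarithmized entries `c`, the logarithmic least squares
problem, normalized by `∑ i, x i = 0`, has a unique solution iff `G` is connected. -/
theorem llsm_unique_normalized_minimizer_iff_connected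
    (n : ℕ) (hn : 1 ≤ n) (G : SimpleGraph (Fin n)) [DecidableRel G.Adj]
    (c : Fin n → Fin n → ℝ)
    (hc : ∀ i j, G.Adj i j → c j i = - c i j) :
    (∃! x : Fin n → ℝ, (∑ i, x i = 0) ∧
        ∀ y : Fin n → ℝ,
          (∑ i, ∑ j, if G.Adj i j then (c i j - x i + x j) ^ 2 else 0) ≤
            ∑ i, ∑ j, if G.Adj i j then (c i j - y i + y j) ^ 2 else 0) ↔
      G.Connected := by
  classical
  have hn' : (n : ℝ) ≠ 0 := by
    have : 0 < n := hn
    positivity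
  simp only [F_eq (G := G) (c := c)]
  constructor
  · rintro ⟨x, ⟨hxs, hxm⟩, huniq⟩
    rw [SimpleGraph.connected_iff]
    refine ⟨?_, ⟨⟨0, hn⟩⟩⟩
    by_contra hpc
    simp only [SimpleGraph.Preconnected, not_forall] at hpc
    obtain ⟨u, v, huv⟩ := hpc
    set h : Fin n → ℝ := fun i => if G.Reachable u i then 1 else 0 with hh
    set m : ℝ := (∑ i, h i) / n with hm
    set e : Fin n → ℝ := fun i => h i - m with he
    have hadj : ∀ i j, G.Adj i j → e i = e j := by
      intro i j hij
      have hiff : (G.Reachable u i) ↔ (G.Reachable u j) :=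
        ⟨fun hr => hr.trans hij.reachable, fun hr => hr.trans hij.symm.reachable⟩
      simp only [he, hh]
      by_cases hr : G.Reachable u i
      · rw [if_pos hr, if_pos (hiff.mp hr)]
      · rw [if_neg hr, if_neg fun hj => hr (hiff.mpr hj)]
    have hDe : Dmap G e = 0 := by
      ext p
      by_cases hp : G.Adj p.1 p.2
      · simp [Dmap, hp, sub_eq_zero.mpr (hadj p.1 p.2 hp)]
      · simp [Dmap, hp]
    have hes : ∑ i, e i = 0 := by
      simp only [he, Finset.sum_sub_distrib, Finset.sum_const, Finset.card_univ,
        Fintype.card_fin, nsmul_eq_mul, hm]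
      field_simp
      ring
    have hDxe : Dmap G (fun i => x i + e i) = Dmap G x := by
      have : (fun i => x i + e i) = x + e := rfl
      rw [this, map_add, hDe, add_zero]
    have h2 : (fun i => x i + e i) = x := by
      refine huniq _ ⟨?_, ?_⟩
      · rw [Finset.sum_add_distrib, hxs, hes, add_zero]
      · intro y; rw [hDxe]; exact hxm y
    have hu0 : e u = 0 := by
      have := congrFun h2 u
      linarith
    have hv0 : e v = 0 := by
      have := congrFun h2 v
      linarith
    have heu : e u = 1 - m := by simp [he, hh, SimpleGraph.Reachable.refl u]
    have hev : e v = -m := by simp [he, hh, huv]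
    rw [heu] at hu0; rw [hev] at hv0
    linarith
  · intro hconn
    obtain ⟨a, haK, b, hbK, hab⟩ :=
      (LinearMap.range (Dmap G)).exists_add_mem_mem_orthogonal (cvec G c)
    obtain ⟨x₀, hx₀⟩ := haK
    have hlow : ∀ y : Fin n → ℝ, ‖b‖ ^ 2 ≤ ‖cvec G c - Dmap G y‖ ^ 2 := by
      intro y
      have hsplit : cvec G c - Dmap G y = (a - Dmap G y) + b := by rw [hab]; abel
      have hmem : a - Dmap G y ∈ LinearMap.range (Dmap G) :=
        Submodule.sub_mem _ ⟨x₀, hx₀⟩ ⟨y, rfl⟩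
      have hinner : inner ℝ (a - Dmap G y) b = 0 :=
        (Submodule.mem_orthogonal _ b).mp hbK _ hmem
      have pyth : ‖(a - Dmap G y) + b‖ ^ 2 = ‖a - Dmap G y‖ ^ 2 + ‖b‖ ^ 2 := by
        rw [pow_two, pow_two, pow_two]
        exact norm_add_sq_eq_norm_sq_add_norm_sq_real hinner
      rw [hsplit, pyth]
      nlinarith [sq_nonneg ‖a - Dmap G y‖]
    have hx₀val : cvec G c - Dmap G x₀ = b := by rw [hab, hx₀]; abel
    set s : ℝ := (∑ i, x₀ i) / n with hs
    set x₁ : Fin n → ℝ := fun i => x₀ i - s with hx₁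
    have hD1 : Dmap G x₁ = Dmap G x₀ := by
      ext p
      by_cases hp : G.Adj p.1 p.2 <;> simp [Dmap, hp, hx₁] <;> ring
    have hsum1 : ∑ i, x₁ i = 0 := by
      simp only [hx₁, Finset.sum_sub_distrib, Finset.sum_const, Finset.card_univ,
        Fintype.card_fin, nsmul_eq_mul, hs]
      field_simp
      ring
    have hmin1 : ∀ y, ‖cvec G c - Dmap G x₁‖ ^ 2 ≤ ‖cvec G c - Dmap G y‖ ^ 2 := by
      intro y; rw [hD1, hx₀val]; exact hlow y
    refine ⟨x₁, ⟨hsum1, hmin1⟩, ?_⟩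
    rintro x' ⟨hs', hm'⟩
    have h1 : ‖cvec G c - Dmap G x'‖ ^ 2 = ‖b‖ ^ 2 := by
      refine le_antisymm ?_ (hlow x')
      have := hm' x₁
      rwa [hD1, hx₀val] at this
    have hsplit : cvec G c - Dmap G x' = (a - Dmap G x') + b := by rw [hab]; abel
    have hinner : inner ℝ (a - Dmap G x') b = 0 :=
      (Submodule.mem_orthogonal _ b).mp hbK _
        (Submodule.sub_mem _ ⟨x₀, hx₀⟩ ⟨x', rfl⟩)
    have hz : ‖a - Dmap G x'‖ ^ 2 = 0 := by
      have pyth : ‖(a - Dmap G x') + b‖ ^ 2 = ‖a - Dmap G x'‖ ^ 2 + ‖b‖ ^ 2 := by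
        rw [pow_two, pow_two, pow_two]
        exact norm_add_sq_eq_norm_sq_add_norm_sq_real hinner
      rw [hsplit, pyth] at h1
      linarith
    have hDx' : Dmap G x' = Dmap G x₁ := by
      have h3 : a - Dmap G x' = 0 := by
        have := pow_eq_zero_iff (n := 2) two_ne_zero |>.mp hz
        exact norm_eq_zero.mp this
      exact ((sub_eq_zero.mp h3).symm.trans hx₀.symm).trans hD1.symm
    have hker : ∀ i j, G.Adj i j → (x' i - x₁ i) = (x' j - x₁ j) := by
      intro i j hij
      have hcomp := congrArg (fun v => v (i, j)) hDx'
      simp only [Dmap, LinearMap.coe_mk, AddHom.coe_mk, PiLp.toLp_apply, hij, if_pos] at hcomp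
      linarith
    funext i
    have hall : ∀ k, x' k - x₁ k = x' i - x₁ i := by
      intro k
      obtain ⟨p⟩ := hconn.preconnected k i
      exact walk_const G hker p
    have hsum0 : ∑ k, (x' k - x₁ k) = 0 := by
      rw [Finset.sum_sub_distrib, hs', hsum1, sub_zero]
    rw [Finset.sum_congr rfl (fun k _ => hall k), Finset.sum_const, Finset.card_univ,
      Fintype.card_fin, nsmul_eq_mul] at hsum0
    have : x' i - x₁ i = 0 := by
      rcases mul_eq_zero.mp hsum0 with h | h
      · exact absurd h hn'
      · exact h
    linarith
end
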